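/- arXiv:2402.17722 — 7 statements merged into one kernel-verified Lean document; each statement's English description precedes it below -/
import Mathlib

section
/- Let F be (ℓ,ω)-smooth on X∩S and suppose the map (x,y) ↦ √(D_ω^sym(x,y)) is a metric on X∩S. Then for any x ∈ X∩S and any ρ, s > 0 with ρ > ℓ/s + 2ℓ, one has Δ_ρ(x)/C(ℓ,ρ,s) ≤ Δ_ρ⁺(x) ≤ C(ℓ,ρ,s)·Δ_ρ(x), where C(ℓ,ρ,s) := ((1+s)(ρ−ℓ) + (1+s⁻¹)ℓ)/(ρ−ℓ−(1+s⁻¹)ℓ). In particular, for s = 1 and ρ = 4ℓ, C(ℓ,ρ,s) = 8 and (1/8)·Δ_{4ℓ}(x) ≤ Δ_{4ℓ}⁺(x) ≤ 8·Δ_{4ℓ}(x). -/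
open RealInnerProductSpace Set MeasureTheory

/-- Euclidean space `ℝ^d`. -/
abbrev Euc (d : ℕ) := EuclideanSpace ℝ (Fin d)

/-- The Bregman divergence `D_ω(x, y) = ω x - ω y - ⟨∇ω y, x - y⟩` induced by a
distance generating function `ω` with gradient map `ω'`. -/
noncomputable def breg {d : ℕ} (ω : Euc d → ℝ) (ω' : Euc d → Euc d) (x y : Euc d) : ℝ :=
  ω x - ω y - ⟪ω' y, x - y⟫

lemma deriv_line' {d : ℕ} (ω : Euc d → ℝ) (g p v : Euc d) (h : HasGradientAt ω g p) :
    HasDerivAt (fun t : ℝ => ω (p + t • v)) ⟪g, v⟫ 0 := by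
  have hline : HasDerivAt (fun t : ℝ => p + t • v) v 0 := by
    simpa using ((hasDerivAt_id (0:ℝ)).smul_const v).const_add p
  have h' : HasFDerivAt ω ((InnerProductSpace.toDual ℝ (Euc d)) g) (p + (0:ℝ) • v) := by
    simpa using h.hasFDerivAt
  have := h'.comp_hasDerivAt 0 hline
  simpa [InnerProductSpace.toDual_apply_apply, Function.comp_def] using this

lemma slope_limit' {d : ℕ} (ω : Euc d → ℝ) (g p v : Euc d)
    (hgrad : HasGradientAt ω g p) (μ A : ℝ)
    (h : ∀ᶠ t : ℝ in nhdsWithin 0 (Set.Ioi 0),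
      t * A ≤ μ * (ω (p + t • v) - ω p - t * ⟪g, v⟫)) : A ≤ 0 := by
  set f : ℝ → ℝ := fun t => ω (p + t • v)
  have hd : HasDerivAt f ⟪g, v⟫ 0 := deriv_line' ω g p v hgrad
  have hslope : Filter.Tendsto (slope f 0) (nhdsWithin 0 {(0:ℝ)}ᶜ) (nhds ⟪g, v⟫) :=
    hasDerivAt_iff_tendsto_slope.mp hd
  have hsub : nhdsWithin (0:ℝ) (Set.Ioi 0) ≤ nhdsWithin 0 {(0:ℝ)}ᶜ :=
    nhdsWithin_mono 0 (fun t ht => ne_of_gt ht)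
  have htend : Filter.Tendsto (fun t => μ * (slope f 0 t - ⟪g, v⟫))
      (nhdsWithin (0:ℝ) (Set.Ioi 0)) (nhds 0) := by
    have := ((hslope.mono_left hsub).sub_const ⟪g, v⟫).const_mul μ
    simpa using this
  refine ge_of_tendsto htend ?_
  filter_upwards [h, self_mem_nhdsWithin] with t ht ht0
  have ht0' : (0:ℝ) < t := ht0
  have hval : μ * (slope f 0 t - ⟪g, v⟫) = (μ * (ω (p + t • v) - ω p - t * ⟪g, v⟫)) / t := by
    have : f 0 = ω p := by simp [f]
    field_simp [slope_def_field, f, this]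
    rw [slope_def_field, this, sub_zero, mul_assoc, sub_mul, div_mul_cancel₀ _ ht0'.ne']
  rw [hval, le_div_iff₀ ht0']
  calc A * t = t * A := by ring
  _ ≤ _ := ht

lemma three_point' {d : ℕ} (X : Set (Euc d)) (hXconv : Convex ℝ X)
    (ω : Euc d → ℝ) (ω' : Euc d → Euc d) (p y : Euc d) (hp : p ∈ X) (hy : y ∈ X)
    (hgrad : HasGradientAt ω (ω' p) p)
    (h : Euc d → ℝ) (μ : ℝ) (hmin : IsMinOn h X p)
    (hcvx : ∀ᶠ t : ℝ in nhdsWithin 0 (Set.Ioi 0),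
      h (p + t • (y - p)) - μ * breg ω ω' (p + t • (y - p)) p ≤
        (1 - t) * h p + t * (h y - μ * breg ω ω' y p)) :
    h p + μ * breg ω ω' y p ≤ h y := by
  have key : h p - (h y - μ * breg ω ω' y p) ≤ 0 := by
    apply slope_limit' ω (ω' p) p (y - p) hgrad μ
    have hIoc : Set.Ioc (0:ℝ) 1 ∈ nhdsWithin (0:ℝ) (Set.Ioi 0) :=
      Ioc_mem_nhdsGT_of_mem (Set.left_mem_Ico.mpr one_pos)
    filter_upwards [hcvx, hIoc] with t hct ht
    have hmemX : p + t • (y - p) ∈ X :=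
      hXconv.add_smul_sub_mem hp hy ⟨ht.1.le, ht.2⟩
    have hminle : h p ≤ h (p + t • (y - p)) := hmin hmemX
    have hbr : breg ω ω' (p + t • (y - p)) p
        = ω (p + t • (y - p)) - ω p - t * ⟪ω' p, y - p⟫ := by
      have h1 : (p + t • (y - p)) - p = t • (y - p) := by abel
      rw [breg, h1, real_inner_smul_right]
    rw [← hbr]
    nlinarith [hct, hminle]
  linarith

/-- Young-type combination: from the metric triangle inequality and the key bound
`(ρ-ℓ) c2 ≤ ℓ (a2 + b2)` deduce `den * b2 ≤ num * a2`. -/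
lemma young_combine (ρ ℓ s a2 b2 c2 : ℝ)
    (hℓ : 0 ≤ ℓ) (hs : 0 < s) (hρ : ℓ / s + 2 * ℓ < ρ)
    (ha2 : 0 ≤ a2) (hb2 : 0 ≤ b2) (hc2 : 0 ≤ c2)
    (hc : (ρ - ℓ) * c2 ≤ ℓ * (a2 + b2))
    (htri : Real.sqrt b2 ≤ Real.sqrt c2 + Real.sqrt a2) :
    (ρ - ℓ - (1 + s⁻¹) * ℓ) * b2 ≤ ((1 + s) * (ρ - ℓ) + (1 + s⁻¹) * ℓ) * a2 := by
  have hρℓ : 0 < ρ - ℓ := by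
    have h1 : 0 ≤ ℓ / s := div_nonneg hℓ hs.le
    linarith
  set sa := Real.sqrt a2
  set sb := Real.sqrt b2
  set sc := Real.sqrt c2
  have hsa2 : sa ^ 2 = a2 := Real.sq_sqrt ha2
  have hsb2 : sb ^ 2 = b2 := Real.sq_sqrt hb2
  have hsc2 : sc ^ 2 = c2 := Real.sq_sqrt hc2
  have hsann : 0 ≤ sa := Real.sqrt_nonneg _
  have hsbnn : 0 ≤ sb := Real.sqrt_nonneg _
  have hscnn : 0 ≤ sc := Real.sqrt_nonneg _
  have hmul : Real.sqrt s * Real.sqrt s⁻¹ = 1 := by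
    rw [Real.sqrt_inv]
    field_simp
  have hss : Real.sqrt s ^ 2 = s := Real.sq_sqrt hs.le
  have hss' : Real.sqrt s⁻¹ ^ 2 = s⁻¹ := Real.sq_sqrt (inv_nonneg.mpr hs.le)
  have e1 : (Real.sqrt s * sa) ^ 2 = s * a2 := by rw [mul_pow, hss, hsa2]
  have e2 : (Real.sqrt s⁻¹ * sc) ^ 2 = s⁻¹ * c2 := by rw [mul_pow, hss', hsc2]
  have e3 : (Real.sqrt s * sa) * (Real.sqrt s⁻¹ * sc) = sa * sc := by
    calc (Real.sqrt s * sa) * (Real.sqrt s⁻¹ * sc)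
        = (Real.sqrt s * Real.sqrt s⁻¹) * (sa * sc) := by ring
      _ = sa * sc := by rw [hmul]; ring
  have hyoung : 2 * sa * sc ≤ s * a2 + s⁻¹ * c2 := by
    nlinarith [sq_nonneg (Real.sqrt s * sa - Real.sqrt s⁻¹ * sc), e1, e2, e3]
  have hb2' : b2 ≤ (1 + s) * a2 + (1 + s⁻¹) * c2 := by
    nlinarith [mul_le_mul_of_nonneg_left htri hsbnn,
      mul_le_mul_of_nonneg_right htri (by linarith : 0 ≤ sc + sa)]
  have h1 : (ρ - ℓ) * b2 ≤ (ρ - ℓ) * ((1 + s) * a2 + (1 + s⁻¹) * c2) :=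
    mul_le_mul_of_nonneg_left hb2' hρℓ.le
  have h2 : (1 + s⁻¹) * ((ρ - ℓ) * c2) ≤ (1 + s⁻¹) * (ℓ * (a2 + b2)) :=
    mul_le_mul_of_nonneg_left hc (by positivity)
  nlinarith [h1, h2]

set_option maxHeartbeats 2000000

/-- Lemma 1, BPM ≈ BGM: if `F` is `(ℓ, ω)`-smooth and `√(D_ω^sym)` is a metric on
`X ∩ S`, then for `ρ, s > 0` with `ρ > ℓ/s + 2ℓ`, the Bregman Proximal Mapping measure
`Δ_ρ(x) = ρ² D_ω^sym(x̂, x)` and the Bregman Gradient Mapping measure `Δ_ρ⁺(x) = ρ² D_ω^sym(x⁺, x)`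
satisfy `Δ_ρ(x)/C(ℓ,ρ,s) ≤ Δ_ρ⁺(x) ≤ C(ℓ,ρ,s) Δ_ρ(x)`, and `C(ℓ, 4ℓ, 1) = 8`. -/
theorem bpm_equiv_bgm {d : ℕ}
    (X S : Set (Euc d))
    (F r ω : Euc d → ℝ) (F' ω' : Euc d → Euc d) (ℓ : ℝ) (hℓ : 0 ≤ ℓ)
    (hXclosed : IsClosed X) (hXconv : Convex ℝ X) (hXne : X.Nonempty)
    (hSopen : IsOpen S) (hriS : intrinsicInterior ℝ X ⊆ S)
    (hωdiff : ∀ z ∈ S, HasGradientAt ω (ω' z) z)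
    (hω'cont : ContinuousOn ω' S)
    (hstrong : ∀ z ∈ closure S, ∀ y ∈ closure S, (1 / 2) * ‖z - y‖ ^ 2 ≤ breg ω ω' z y)
    (hr : ConvexOn ℝ Set.univ r) (hrlsc : LowerSemicontinuous r)
    (hFdiff : ∀ z ∈ X ∩ S, HasGradientAt F (F' z) z)
    (hsmooth : ∀ z ∈ X ∩ S, ∀ y ∈ X ∩ S,
      -(ℓ * breg ω ω' z y) ≤ F z - F y - ⟪F' y, z - y⟫ ∧
        F z - F y - ⟪F' y, z - y⟫ ≤ ℓ * breg ω ω' z y)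
    (hmetric_tri : ∀ x ∈ X ∩ S, ∀ y ∈ X ∩ S, ∀ z ∈ X ∩ S,
      Real.sqrt (breg ω ω' x z + breg ω ω' z x) ≤
        Real.sqrt (breg ω ω' x y + breg ω ω' y x) +
          Real.sqrt (breg ω ω' y z + breg ω ω' z y))
    (hmetric_eq : ∀ x ∈ X ∩ S, ∀ y ∈ X ∩ S, (breg ω ω' x y + breg ω ω' y x = 0 ↔ x = y))
    (ρ s : ℝ) (hρpos : 0 < ρ) (hs : 0 < s) (hρ : ℓ / s + 2 * ℓ < ρ)
    (x : Euc d) (hx : x ∈ X ∩ S)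
    (xhat xplus : Euc d)
    (hxhatmem : xhat ∈ X ∩ S)
    (hxhat : IsMinOn (fun y => F y + r y + ρ * breg ω ω' y x) X xhat)
    (hxplusmem : xplus ∈ X ∩ S)
    (hxplus : IsMinOn (fun y => ⟪F' x, y⟫ + r y + ρ * breg ω ω' y x) X xplus) :
    (ρ ^ 2 * (breg ω ω' xhat x + breg ω ω' x xhat)) /
        (((1 + s) * (ρ - ℓ) + (1 + s⁻¹) * ℓ) / (ρ - ℓ - (1 + s⁻¹) * ℓ)) ≤
      ρ ^ 2 * (breg ω ω' xplus x + breg ω ω' x xplus) ∧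
    ρ ^ 2 * (breg ω ω' xplus x + breg ω ω' x xplus) ≤
      (((1 + s) * (ρ - ℓ) + (1 + s⁻¹) * ℓ) / (ρ - ℓ - (1 + s⁻¹) * ℓ)) *
        (ρ ^ 2 * (breg ω ω' xhat x + breg ω ω' x xhat)) ∧
    (0 < ℓ →
      ((1 + (1 : ℝ)) * (4 * ℓ - ℓ) + (1 + (1 : ℝ)⁻¹) * ℓ) /
          (4 * ℓ - ℓ - (1 + (1 : ℝ)⁻¹) * ℓ) = 8) := by
  obtain ⟨hxX, hxS⟩ := hx
  obtain ⟨hhX, hhS⟩ := hxhatmem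
  obtain ⟨hpX, hpS⟩ := hxplusmem
  have hxmem : x ∈ X ∩ S := ⟨hxX, hxS⟩
  have hhmem : xhat ∈ X ∩ S := ⟨hhX, hhS⟩
  have hpmem : xplus ∈ X ∩ S := ⟨hpX, hpS⟩
  have hρℓ : 0 < ρ - ℓ := by
    have h1 : 0 ≤ ℓ / s := div_nonneg hℓ hs.le
    linarith
  -- nonnegativity of breg on X ∩ S
  have hnn : ∀ u ∈ X ∩ S, ∀ v ∈ X ∩ S, 0 ≤ breg ω ω' u v := by
    intro u hu v hv
    have h1 := hstrong u (subset_closure hu.2) v (subset_closure hv.2)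
    nlinarith [sq_nonneg ‖u - v‖]
  set G : Euc d → ℝ := fun z => ⟪F' x, z⟫ + r z + ρ * breg ω ω' z x with hGdef
  set H : Euc d → ℝ := fun z => F z + r z + ρ * breg ω ω' z x with hHdef
  have hIoc : Set.Ioc (0:ℝ) 1 ∈ nhdsWithin (0:ℝ) (Set.Ioi 0) :=
    Ioc_mem_nhdsGT_of_mem (Set.left_mem_Ico.mpr one_pos)
  -- three point inequality for G at xplus
  have hG3 : G xplus + ρ * breg ω ω' xhat xplus ≤ G xhat := by
    apply three_point' X hXconv ω ω' xplus xhat hpX hhX (hωdiff xplus hpS) G ρ hxplus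
    have hdec : ∀ z : Euc d, G z - ρ * breg ω ω' z xplus
        = ⟪F' x + ρ • (ω' xplus - ω' x), z⟫ + r z
          + (ρ * breg ω ω' xplus x - ρ * ⟪ω' xplus - ω' x, xplus⟫) := by
      intro z
      simp only [hGdef, breg, inner_add_left, real_inner_smul_left, inner_sub_left,
        inner_sub_right]
      ring
    filter_upwards [hIoc] with t ht
    set u : Euc d := F' x + ρ • (ω' xplus - ω' x) with hu
    set zt : Euc d := xplus + t • (xhat - xplus) with hzt
    have hcomb : zt = (1 - t) • xplus + t • xhat := by rw [hzt]; module
    have hinner : ⟪u, zt⟫ = (1 - t) * ⟪u, xplus⟫ + t * ⟪u, xhat⟫ := by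
      rw [hcomb, inner_add_right, real_inner_smul_right, real_inner_smul_right]
    have hrcvx : r zt ≤ (1 - t) * r xplus + t * r xhat := by
      have := hr.2 (mem_univ xplus) (mem_univ xhat)
        (by linarith [ht.2] : (0:ℝ) ≤ 1 - t) ht.1.le (by ring)
      rw [← hcomb] at this
      exact this
    have h0 : breg ω ω' xplus xplus = 0 := by simp [breg]
    have d2 : G xplus = ⟪u, xplus⟫ + r xplus
        + (ρ * breg ω ω' xplus x - ρ * ⟪ω' xplus - ω' x, xplus⟫) := by
      have := hdec xplus
      rw [h0] at this
      linarith
    have d3 := hdec xhat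
    have d1 := hdec zt
    rw [d1, d2, d3]
    linarith [hrcvx, hinner]
  -- three point inequality for H at xhat
  have hsupp : ∀ z ∈ X ∩ S, ∀ w ∈ X ∩ S,
      F z + ℓ * breg ω ω' z xhat
        + (⟪F' z, w - z⟫ + ℓ * ⟪ω' z - ω' xhat, w - z⟫)
        ≤ F w + ℓ * breg ω ω' w xhat := by
    intro z hz w hw
    have hsm := (hsmooth w hw z hz).1
    have idD : breg ω ω' w xhat
        = breg ω ω' z xhat + ⟪ω' z - ω' xhat, w - z⟫ + breg ω ω' w z := by
      simp only [breg, inner_sub_left, inner_sub_right]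
      ring
    have idD' : ℓ * breg ω ω' w xhat = ℓ * breg ω ω' z xhat
        + ℓ * ⟪ω' z - ω' xhat, w - z⟫ + ℓ * breg ω ω' w z := by
      rw [idD]; ring
    linarith
  have hH3 : H xhat + (ρ - ℓ) * breg ω ω' xplus xhat ≤ H xplus := by
    apply three_point' X hXconv ω ω' xhat xplus hhX hpX (hωdiff xhat hhS) H (ρ - ℓ) hxhat
    have hdec : ∀ z : Euc d, H z - (ρ - ℓ) * breg ω ω' z xhat
        = (F z + ℓ * breg ω ω' z xhat) + r z + ⟪ρ • (ω' xhat - ω' x), z⟫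
          + (ρ * breg ω ω' xhat x - ρ * ⟪ω' xhat - ω' x, xhat⟫) := by
      intro z
      simp only [hHdef, breg, real_inner_smul_left, inner_sub_left, inner_sub_right]
      ring
    have hScont : ∀ᶠ t : ℝ in nhdsWithin 0 (Set.Ioi 0), xhat + t • (xplus - xhat) ∈ S := by
      have hc : ContinuousAt (fun t : ℝ => xhat + t • (xplus - xhat)) 0 := by fun_prop
      have hmem : S ∈ nhds ((fun t : ℝ => xhat + t • (xplus - xhat)) 0) := by
        simpa using hSopen.mem_nhds hhS
      exact (hc.eventually_mem hmem).filter_mono nhdsWithin_le_nhds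
    filter_upwards [hIoc, hScont] with t ht htS
    set wv : Euc d := ρ • (ω' xhat - ω' x) with hwv
    set zt : Euc d := xhat + t • (xplus - xhat) with hzt
    have hztX : zt ∈ X := hXconv.add_smul_sub_mem hhX hpX ⟨ht.1.le, ht.2⟩
    have hztmem : zt ∈ X ∩ S := ⟨hztX, htS⟩
    have hcomb : zt = (1 - t) • xhat + t • xplus := by rw [hzt]; module
    have h1t : (0:ℝ) ≤ 1 - t := by linarith [ht.2]
    have s1 := hsupp zt hztmem xhat hhmem
    have s2 := hsupp zt hztmem xplus hpmem
    have c1 := mul_le_mul_of_nonneg_left s1 h1t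
    have c2 := mul_le_mul_of_nonneg_left s2 ht.1.le
    have hz0 : (1 - t) • (xhat - zt) + t • (xplus - zt) = 0 := by rw [hzt]; module
    have hlin : ∀ a : Euc d, (1 - t) * ⟪a, xhat - zt⟫ + t * ⟪a, xplus - zt⟫ = 0 := by
      intro a
      rw [← real_inner_smul_right, ← real_inner_smul_right, ← inner_add_right, hz0,
        inner_zero_right]
    have hlinF := hlin (F' zt)
    have hlinl : (1 - t) * (ℓ * ⟪ω' zt - ω' xhat, xhat - zt⟫)
        + t * (ℓ * ⟪ω' zt - ω' xhat, xplus - zt⟫) = 0 := by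
      linear_combination ℓ * (hlin (ω' zt - ω' xhat))
    have hinner : ⟪wv, zt⟫ = (1 - t) * ⟪wv, xhat⟫ + t * ⟪wv, xplus⟫ := by
      rw [hcomb, inner_add_right, real_inner_smul_right, real_inner_smul_right]
    have hrcvx : r zt ≤ (1 - t) * r xhat + t * r xplus := by
      have := hr.2 (mem_univ xhat) (mem_univ xplus)
        (by linarith [ht.2] : (0:ℝ) ≤ 1 - t) ht.1.le (by ring)
      rw [← hcomb] at this
      exact this
    have h0 : breg ω ω' xhat xhat = 0 := by simp [breg]
    have h0l : ℓ * breg ω ω' xhat xhat = 0 := by rw [h0]; ring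
    have d2 : H xhat = (F xhat + ℓ * breg ω ω' xhat xhat) + r xhat + ⟪wv, xhat⟫
        + (ρ * breg ω ω' xhat x - ρ * ⟪ω' xhat - ω' x, xhat⟫) := by
      have := hdec xhat
      rw [h0] at this
      rw [h0]
      linarith
    have d3 := hdec xplus
    have d1 := hdec zt
    rw [d1, d2, d3]
    linarith [c1, c2, hlinF, hlinl, hrcvx, hinner, h0l]
  -- the key chain inequality
  have hch1 := (hsmooth xplus hpmem x hxmem).2
  have hch2 := (hsmooth xhat hhmem x hxmem).1
  have hi1 : ⟪F' x, xplus - x⟫ = ⟪F' x, xplus⟫ - ⟪F' x, x⟫ := inner_sub_right _ _ _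
  have hi2 : ⟪F' x, xhat - x⟫ = ⟪F' x, xhat⟫ - ⟪F' x, x⟫ := inner_sub_right _ _ _
  have hkey : ρ * breg ω ω' xhat xplus + (ρ - ℓ) * breg ω ω' xplus xhat
      ≤ ℓ * breg ω ω' xplus x + ℓ * breg ω ω' xhat x := by
    have e1 : H xplus ≤ G xplus + ℓ * breg ω ω' xplus x + (F x - ⟪F' x, x⟫) := by
      simp only [hGdef, hHdef]
      linarith [hch1, hi1]
    have e2 : G xhat - ℓ * breg ω ω' xhat x + (F x - ⟪F' x, x⟫) ≤ H xhat := by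
      simp only [hGdef, hHdef]
      linarith [hch2, hi2]
    linarith [hG3, hH3, e1, e2]
  -- nonnegativity instances
  have nb1 : 0 ≤ breg ω ω' xhat x := hnn xhat hhmem x hxmem
  have nb2 : 0 ≤ breg ω ω' x xhat := hnn x hxmem xhat hhmem
  have nb3 : 0 ≤ breg ω ω' xplus x := hnn xplus hpmem x hxmem
  have nb4 : 0 ≤ breg ω ω' x xplus := hnn x hxmem xplus hpmem
  have nb5 : 0 ≤ breg ω ω' xhat xplus := hnn xhat hhmem xplus hpmem
  have nb6 : 0 ≤ breg ω ω' xplus xhat := hnn xplus hpmem xhat hhmem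
  set a2 : ℝ := breg ω ω' xhat x + breg ω ω' x xhat with ha2def
  set b2 : ℝ := breg ω ω' xplus x + breg ω ω' x xplus with hb2def
  set c2 : ℝ := breg ω ω' xhat xplus + breg ω ω' xplus xhat with hc2def
  have ha2 : 0 ≤ a2 := by rw [ha2def]; linarith
  have hb2 : 0 ≤ b2 := by rw [hb2def]; linarith
  have hc2 : 0 ≤ c2 := by rw [hc2def]; linarith
  have hcB : (ρ - ℓ) * c2 ≤ ℓ * (a2 + b2) := by
    rw [hc2def, ha2def, hb2def]
    have p1 : 0 ≤ ℓ * breg ω ω' xhat xplus := mul_nonneg hℓ nb5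
    have p2 : 0 ≤ ℓ * breg ω ω' x xhat := mul_nonneg hℓ nb2
    have p3 : 0 ≤ ℓ * breg ω ω' x xplus := mul_nonneg hℓ nb4
    nlinarith [hkey, p1, p2, p3]
  have hcA : (ρ - ℓ) * c2 ≤ ℓ * (b2 + a2) := by linarith
  have ht1 : Real.sqrt b2 ≤ Real.sqrt c2 + Real.sqrt a2 := by
    have := hmetric_tri xplus hpmem xhat hhmem x hxmem
    have hcc : breg ω ω' xplus xhat + breg ω ω' xhat xplus = c2 := by
      rw [hc2def]; ring
    rw [hcc] at this
    exact this
  have hyb : (ρ - ℓ - (1 + s⁻¹) * ℓ) * b2 ≤ ((1 + s) * (ρ - ℓ) + (1 + s⁻¹) * ℓ) * a2 :=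
    young_combine ρ ℓ s a2 b2 c2 hℓ hs hρ ha2 hb2 hc2 hcB ht1
  have ht2' : Real.sqrt a2 ≤ Real.sqrt c2 + Real.sqrt b2 := by
    have := hmetric_tri xhat hhmem xplus hpmem x hxmem
    exact this
  have hya : (ρ - ℓ - (1 + s⁻¹) * ℓ) * a2 ≤ ((1 + s) * (ρ - ℓ) + (1 + s⁻¹) * ℓ) * b2 :=
    young_combine ρ ℓ s b2 a2 c2 hℓ hs hρ hb2 ha2 hc2 hcA ht2'
  have hden : 0 < ρ - ℓ - (1 + s⁻¹) * ℓ := by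
    have hinv : ℓ * s⁻¹ = ℓ / s := by rw [div_eq_mul_inv]
    nlinarith [hinv]
  have hnum : 0 < (1 + s) * (ρ - ℓ) + (1 + s⁻¹) * ℓ := by
    have p1 : 0 < (1 + s) * (ρ - ℓ) := mul_pos (by linarith) hρℓ
    have p2 : 0 ≤ (1 + s⁻¹) * ℓ := mul_nonneg (by positivity) hℓ
    linarith
  have hC : 0 < ((1 + s) * (ρ - ℓ) + (1 + s⁻¹) * ℓ) / (ρ - ℓ - (1 + s⁻¹) * ℓ) :=
    div_pos hnum hden
  refine ⟨?_, ?_, ?_⟩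
  · rw [div_le_iff₀ hC, mul_div_assoc', le_div_iff₀ hden]
    nlinarith [mul_le_mul_of_nonneg_left hya (sq_nonneg ρ)]
  · rw [div_mul_eq_mul_div, le_div_iff₀ hden]
    nlinarith [mul_le_mul_of_nonneg_left hyb (sq_nonneg ρ)]
  · intro hl
    have h1 : (1:ℝ)⁻¹ = 1 := inv_one
    rw [h1]
    have hne : 4 * ℓ - ℓ - (1 + 1) * ℓ ≠ 0 := by
      have : 4 * ℓ - ℓ - (1 + 1) * ℓ = ℓ := by ring
      rw [this]; exact ne_of_gt hl
    rw [div_eq_iff hne]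
    ring
end

section
/- Let F be (ℓ,ω)-smooth on X∩S. Then for any ρ > ℓ and any x ∈ X∩S, the Bregman proximal point x̂ and the Bregman gradient-mapping point x⁺ satisfy ρ²·D_ω^sym(x̂, x⁺) ≤ (ℓ/(ρ−ℓ))·(Δ_ρ(x) + Δ_ρ⁺(x)). -/
open RealInnerProductSpace Set MeasureTheory Filter Topology

lemma vi_aux {d : ℕ} {X : Set (Euc d)} (hXconv : Convex ℝ X)
    {φ r : Euc d → ℝ} {g xm : Euc d} (hxm : xm ∈ X)
    (hφ : HasGradientAt φ g xm) (hr : ConvexOn ℝ Set.univ r)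
    (hmin : IsMinOn (fun y => φ y + r y) X xm)
    {y : Euc d} (hy : y ∈ X) : 0 ≤ ⟪g, y - xm⟫ + (r y - r xm) := by
  set c : ℝ → Euc d := fun t => xm + t • (y - xm) with hc
  have hcd : HasDerivAt c (y - xm) 0 := by
    simpa [hc] using ((hasDerivAt_id (0:ℝ)).smul_const (y - xm)).const_add xm
  have hφ' : HasFDerivAt φ ((InnerProductSpace.toDual ℝ (Euc d)) g) (c 0) := by
    simpa [hc] using hasGradientAt_iff_hasFDerivAt.mp hφ
  have hderiv : HasDerivAt (fun t : ℝ => φ (c t)) ⟪g, y - xm⟫ 0 := by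
    exact (hφ'.comp_hasDerivAt 0 hcd).congr_deriv (by simp)
  have hslope : ∀ t ∈ Ioc (0:ℝ) 1, -(r y - r xm) ≤ slope (fun t => φ (c t)) 0 t := by
    intro t ht
    have hmem : c t ∈ X := hXconv.add_smul_sub_mem hxm hy ⟨le_of_lt ht.1, ht.2⟩
    have h1 : φ xm + r xm ≤ φ (c t) + r (c t) := hmin hmem
    have hco : c t = (1 - t) • xm + t • y := by
      simp [hc, smul_sub, sub_smul]; module
    have h2 : r (c t) ≤ (1 - t) * r xm + t * r y := by
      rw [hco]
      simpa [smul_eq_mul] using hr.2 (mem_univ xm) (mem_univ y)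
        (by linarith [ht.2] : (0:ℝ) ≤ 1 - t) (le_of_lt ht.1) (by ring)
    have h3 : -t * (r y - r xm) ≤ φ (c t) - φ (c 0) := by
      have : c 0 = xm := by simp [hc]
      rw [this]; nlinarith
    rw [slope_def_field]
    rw [div_eq_inv_mul, sub_zero, neg_le, ← neg_mul]
    calc -t⁻¹ * (φ (c t) - φ (c 0)) ≤ -t⁻¹ * (-t * (r y - r xm)) := by
          apply mul_le_mul_of_nonpos_left h3
          simp [le_of_lt ht.1]
      _ = r y - r xm := by field_simp [ne_of_gt ht.1]
  have hT : Tendsto (slope (fun t => φ (c t)) 0) (𝓝[>] (0:ℝ)) (𝓝 ⟪g, y - xm⟫) :=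
    (hasDerivAt_iff_tendsto_slope.mp hderiv).mono_left
      (nhdsWithin_mono 0 (fun t ht => ne_of_gt ht))
  have : -(r y - r xm) ≤ ⟪g, y - xm⟫ := by
    refine ge_of_tendsto hT ?_
    filter_upwards [Ioc_mem_nhdsGT_of_mem (by simp : (0:ℝ) ∈ Ico (0:ℝ) 1)] with t ht
    exact hslope t ht
  linarith

lemma grad_aux {d : ℕ} (ω : Euc d → ℝ) (ω' : Euc d → Euc d) (x z : Euc d) (ρ : ℝ)
    (hω : HasGradientAt ω (ω' z) z) (G : Euc d → ℝ) (G' : Euc d)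
    (hG : HasGradientAt G G' z) :
    HasGradientAt (fun y => G y + ρ * breg ω ω' y x) (G' + ρ • (ω' z - ω' x)) z := by
  set T := InnerProductSpace.toDual ℝ (Euc d)
  have hlin : HasFDerivAt (fun y : Euc d => ⟪ω' x, y - x⟫) (T (ω' x)) z := by
    have h1 : HasFDerivAt (fun y : Euc d => ⟪ω' x, y⟫ - ⟪ω' x, x⟫) (T (ω' x)) z :=
      (T (ω' x)).hasFDerivAt.sub_const _
    have : (fun y : Euc d => ⟪ω' x, y - x⟫) = fun y => ⟪ω' x, y⟫ - ⟪ω' x, x⟫ := by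
      funext y; rw [inner_sub_right]
    rw [this]; exact h1
  have hb : HasFDerivAt (fun y => breg ω ω' y x) (T (ω' z) - T (ω' x)) z := by
    have := ((hasGradientAt_iff_hasFDerivAt.mp hω).sub_const (ω x)).sub hlin
    exact this
  have := (hasGradientAt_iff_hasFDerivAt.mp hG).add (hb.const_mul ρ)
  rw [hasGradientAt_iff_hasFDerivAt]
  convert this using 1
  · rfl
  · rfl
  · rfl
  ext v
  simp [T, inner_add_left, inner_sub_left, inner_smul_left]

/-- Lemma 5: if `F` is `(ℓ, ω)`-smooth, then for any `ρ > ℓ` and `x ∈ X ∩ S`,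
`ρ² D_ω^sym(x̂, x⁺) ≤ (ℓ/(ρ-ℓ)) (Δ_ρ(x) + Δ_ρ⁺(x))`. -/
theorem bregman_prox_close_to_gradient_mapping {d : ℕ}
    (X S : Set (Euc d))
    (F r ω : Euc d → ℝ) (F' ω' : Euc d → Euc d) (ℓ : ℝ) (hℓ : 0 ≤ ℓ)
    (hXclosed : IsClosed X) (hXconv : Convex ℝ X) (hXne : X.Nonempty)
    (hSopen : IsOpen S) (hriS : intrinsicInterior ℝ X ⊆ S)
    (hωdiff : ∀ z ∈ S, HasGradientAt ω (ω' z) z)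
    (hω'cont : ContinuousOn ω' S)
    (hstrong : ∀ z ∈ closure S, ∀ y ∈ closure S, (1 / 2) * ‖z - y‖ ^ 2 ≤ breg ω ω' z y)
    (hr : ConvexOn ℝ Set.univ r) (hrlsc : LowerSemicontinuous r)
    (hFdiff : ∀ z ∈ X ∩ S, HasGradientAt F (F' z) z)
    (hsmooth : ∀ z ∈ X ∩ S, ∀ y ∈ X ∩ S,
      -(ℓ * breg ω ω' z y) ≤ F z - F y - ⟪F' y, z - y⟫ ∧
        F z - F y - ⟪F' y, z - y⟫ ≤ ℓ * breg ω ω' z y)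
    (ρ : ℝ) (hρ : ℓ < ρ)
    (x : Euc d) (hx : x ∈ X ∩ S)
    (xhat xplus : Euc d)
    (hxhatmem : xhat ∈ X ∩ S)
    (hxhat : IsMinOn (fun y => F y + r y + ρ * breg ω ω' y x) X xhat)
    (hxplusmem : xplus ∈ X ∩ S)
    (hxplus : IsMinOn (fun y => ⟪F' x, y⟫ + r y + ρ * breg ω ω' y x) X xplus) :
    ρ ^ 2 * (breg ω ω' xhat xplus + breg ω ω' xplus xhat) ≤
      (ℓ / (ρ - ℓ)) *
        (ρ ^ 2 * (breg ω ω' xhat x + breg ω ω' x xhat) +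
          ρ ^ 2 * (breg ω ω' xplus x + breg ω ω' x xplus)) := by
  have hnn : ∀ a ∈ S, ∀ b ∈ S, 0 ≤ breg ω ω' a b := fun a ha b hb =>
    le_trans (by positivity) (hstrong a (subset_closure ha) b (subset_closure hb))
  -- variational inequality at xhat
  have hgradhat : HasGradientAt (fun y => F y + ρ * breg ω ω' y x)
      (F' xhat + ρ • (ω' xhat - ω' x)) xhat :=
    grad_aux ω ω' x xhat ρ (hωdiff xhat hxhatmem.2) F (F' xhat) (hFdiff xhat hxhatmem)
  have hminhat : IsMinOn (fun y => (F y + ρ * breg ω ω' y x) + r y) X xhat := by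
    intro y hy
    have := hxhat hy
    simp only [Set.mem_setOf_eq] at this ⊢
    linarith
  have A := vi_aux hXconv hxhatmem.1 hgradhat hr hminhat hxplusmem.1
  -- variational inequality at xplus
  have hgradplus : HasGradientAt (fun y => ⟪F' x, y⟫ + ρ * breg ω ω' y x)
      (F' x + ρ • (ω' xplus - ω' x)) xplus := by
    refine grad_aux ω ω' x xplus ρ (hωdiff xplus hxplusmem.2) _ (F' x) ?_
    rw [hasGradientAt_iff_hasFDerivAt]
    exact (InnerProductSpace.toDual ℝ (Euc d) (F' x)).hasFDerivAt
  have hminplus : IsMinOn (fun y => (⟪F' x, y⟫ + ρ * breg ω ω' y x) + r y) X xplus := by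
    intro y hy
    have := hxplus hy
    simp only [Set.mem_setOf_eq] at this ⊢
    linarith
  have B := vi_aux hXconv hxplusmem.1 hgradplus hr hminplus hxhatmem.1
  -- smoothness inequalities
  have C := (hsmooth xplus hxplusmem xhat hxhatmem).1
  have D := (hsmooth xplus hxplusmem x hx).2
  have E := (hsmooth xhat hxhatmem x hx).1
  -- key inequality
  have K : (ρ - ℓ) * breg ω ω' xplus xhat + ρ * breg ω ω' xhat xplus ≤
      ℓ * (breg ω ω' xplus x + breg ω ω' xhat x) := by
    simp only [breg, inner_add_left, inner_sub_left, inner_sub_right,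
      real_inner_smul_left] at A B C D E ⊢
    nlinarith [A, B, C, D, E]
  have n1 := hnn xhat hxhatmem.2 xplus hxplusmem.2
  have n2 := hnn xplus hxplusmem.2 xhat hxhatmem.2
  have n4 := hnn x hx.2 xhat hxhatmem.2
  have n6 := hnn x hx.2 xplus hxplusmem.2
  have hpos : 0 < ρ - ℓ := by linarith
  rw [div_mul_eq_mul_div, le_div_iff₀ hpos]
  have K2 := mul_le_mul_of_nonneg_left K (sq_nonneg ρ)
  nlinarith [K2, mul_nonneg (mul_nonneg (sq_nonneg ρ) hℓ) n1,
    mul_nonneg (mul_nonneg (sq_nonneg ρ) hℓ) n4,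
    mul_nonneg (mul_nonneg (sq_nonneg ρ) hℓ) n6]
end

section
/- Let F be (ℓ,ω)-smooth on X∩S. Then for every x ∈ X∩S, ρ > 0 and ρ₁ ≥ ρ + ℓ, the Bregman Moreau envelope satisfies the deterministic descent inequality Φ_{1/ρ}(x) ≤ Φ(x) − (1/(2ρ₁))·𝒟_{ρ₁}(x). -/
open RealInnerProductSpace Set MeasureTheory

/-- The Bregman Forward-Backward Envelope
`𝒟_ρ(x) = -2ρ ⬝ min_{y ∈ X} [⟨∇F x, y - x⟩ + ρ D_ω(y, x) + r y - r x]`. -/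
noncomputable def Dfbe {d : ℕ} (X : Set (Euc d)) (F' : Euc d → Euc d) (r : Euc d → ℝ)
    (ω : Euc d → ℝ) (ω' : Euc d → Euc d) (ρ : ℝ) (x : Euc d) : ℝ :=
  -2 * ρ * sInf ((fun y => ⟪F' x, y - x⟫ + ρ * breg ω ω' y x + r y - r x) '' X)

/-- The Bregman Moreau envelope `Φ_{1/ρ}(x) = min_{y ∈ X} [Φ y + ρ D_ω(y, x)]` of `Φ = F + r`. -/
noncomputable def moreau {d : ℕ} (X : Set (Euc d)) (F r ω : Euc d → ℝ) (ω' : Euc d → Euc d)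
    (ρ : ℝ) (x : Euc d) : ℝ :=
  sInf ((fun y => F y + r y + ρ * breg ω ω' y x) '' X)

/-- Step I, deterministic descent w.r.t. BFBE: if `F` is `(ℓ, ω)`-smooth, then for
every `x ∈ X ∩ S`, `ρ > 0` and `ρ₁ ≥ ρ + ℓ`, `Φ_{1/ρ}(x) ≤ Φ(x) - 𝒟_{ρ₁}(x)/(2ρ₁)`. -/
theorem moreau_descent_bfbe {d : ℕ}
    (X S : Set (Euc d))
    (F r ω : Euc d → ℝ) (F' ω' : Euc d → Euc d) (ℓ : ℝ) (hℓ : 0 ≤ ℓ)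
    (hXclosed : IsClosed X) (hXconv : Convex ℝ X) (hXne : X.Nonempty)
    (hSopen : IsOpen S) (hriS : intrinsicInterior ℝ X ⊆ S)
    (hωdiff : ∀ z ∈ S, HasGradientAt ω (ω' z) z)
    (hω'cont : ContinuousOn ω' S)
    (hstrong : ∀ z ∈ closure S, ∀ y ∈ closure S, (1 / 2) * ‖z - y‖ ^ 2 ≤ breg ω ω' z y)
    (hr : ConvexOn ℝ Set.univ r) (hrlsc : LowerSemicontinuous r)
    (hFdiff : ∀ z ∈ X ∩ S, HasGradientAt F (F' z) z)
    (hsmooth : ∀ z ∈ X ∩ S, ∀ y ∈ X ∩ S,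
      -(ℓ * breg ω ω' z y) ≤ F z - F y - ⟪F' y, z - y⟫ ∧
        F z - F y - ⟪F' y, z - y⟫ ≤ ℓ * breg ω ω' z y)
    (x : Euc d) (hx : x ∈ X ∩ S)
    (ρ ρ₁ : ℝ) (hρ : 0 < ρ) (hρ₁ : ρ + ℓ ≤ ρ₁)
    (hmoreau_att : ∃ y ∈ X ∩ S, IsMinOn (fun u => F u + r u + ρ * breg ω ω' u x) X y)
    (hfbe_att : ∃ y ∈ X ∩ S,
      IsMinOn (fun u => ⟪F' x, u - x⟫ + ρ₁ * breg ω ω' u x + r u - r x) X y) :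
    moreau X F r ω ω' ρ x ≤ F x + r x - (1 / (2 * ρ₁)) * Dfbe X F' r ω ω' ρ₁ x := by
  obtain ⟨y₀, hy₀XS, hy₀min⟩ := hmoreau_att
  obtain ⟨y, hyXS, hymin⟩ := hfbe_att
  have hρ₁pos : 0 < ρ₁ := lt_of_lt_of_le (by linarith) hρ₁
  set Q := fun u => ⟪F' x, u - x⟫ + ρ₁ * breg ω ω' u x + r u - r x with hQ
  have hbddQ : BddBelow (Q '' X) := ⟨Q y, by rintro _ ⟨u, hu, rfl⟩; exact hymin hu⟩
  have hQinf : sInf (Q '' X) = Q y := le_antisymm (csInf_le hbddQ ⟨y, hyXS.1, rfl⟩)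
    (le_csInf ⟨Q y, ⟨y, hyXS.1, rfl⟩⟩ (by rintro _ ⟨u, hu, rfl⟩; exact hymin hu))
  set M := fun u => F u + r u + ρ * breg ω ω' u x with hM
  have hbddM : BddBelow (M '' X) := ⟨M y₀, by rintro _ ⟨u, hu, rfl⟩; exact hy₀min hu⟩
  have h1 : moreau X F r ω ω' ρ x ≤ M y := csInf_le hbddM ⟨y, hyXS.1, rfl⟩
  have hD : 0 ≤ breg ω ω' y x :=
    le_trans (by positivity) (hstrong y (subset_closure hyXS.2) x (subset_closure hx.2))
  have hsm := (hsmooth y hyXS x hx).2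
  have hDfbe : Dfbe X F' r ω ω' ρ₁ x = -2 * ρ₁ * Q y := by rw [Dfbe, hQinf]
  rw [hDfbe]
  have hfrac : (1 / (2 * ρ₁)) * (-2 * ρ₁ * Q y) = -Q y := by
    field_simp
  rw [hfrac]
  have h2 : M y ≤ F x + r x - -Q y := by
    simp only [hM, hQ]
    nlinarith [mul_nonneg (by linarith : (0:ℝ) ≤ ρ₁ - ρ - ℓ) hD]
  linarith
end

section
/- Let F be (ℓ,ω)-smooth on X∩S, ρ > ℓ, and let η_t ≤ η_{t−1} be positive step-sizes. Fix x_t ∈ X∩S, let ψ_t ∈ ℝ^d be arbitrary, set g_t := ∇F(x_t) + ψ_t, let x_{t+1} := argmin_{x∈X}[η_t(⟨g_t, x⟩ + r(x)) + D_ω(x, x_t)] and let x̂_t := argmin_{y∈X}[Φ(y) + ρD_ω(y, x_t)] (both assumed to exist and lie in X∩S). Define the Lyapunov value λ_t := Φ_{1/ρ}(x_t) − Φ* + η_{t−1}·ρ·(Φ(x_t) − Φ*) and λ_{t+1} := Φ_{1/ρ}(x_{t+1}) − Φ* + η_t·ρ·(Φ(x_{t+1}) − Φ*). Then λ_{t+1}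 ≤ λ_t − (η_t ρ/(2(ρ+ℓ)))·𝒟_{ρ+ℓ}(x_t) + ρη_t⟨ψ_t, x̂_t − x_t⟩ + ρ(η_t⟨ψ_t, x_t − x_{t+1}⟩ − (1 − η_t ℓ)·D_ω(x_{t+1}, x_t)) − η_t ρ(ρ − ℓ)·D_ω(x̂_t, x_t). -/
open RealInnerProductSpace Set MeasureTheory

/-- Three-point identity for the Bregman divergence. -/
lemma breg_three {d : ℕ} (ω : Euc d → ℝ) (ω' : Euc d → Euc d) (a b c : Euc d) :
    breg ω ω' a b = breg ω ω' a c - breg ω ω' b c + ⟪ω' c - ω' b, a - b⟫ := by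
  simp only [breg, inner_sub_left, inner_sub_right]
  ring

/-- First-order optimality condition for the Bregman proximal step. -/
lemma opt_ineq {d : ℕ} {X : Set (Euc d)} (hXconv : Convex ℝ X)
    (ω r : Euc d → ℝ) (ω' : Euc d → Euc d) (g : Euc d)
    (hr : ConvexOn ℝ Set.univ r) {η : ℝ} (hη : 0 ≤ η)
    (xt xs y : Euc d) (hxs : xs ∈ X) (hy : y ∈ X)
    (hmin : IsMinOn (fun z => η * (⟪g, z⟫ + r z) + breg ω ω' z xt) X xs)
    (hω : HasGradientAt ω (ω' xs) xs) :
    0 ≤ η * ⟪g, y - xs⟫ + η * (r y - r xs) + ⟪ω' xs - ω' xt, y - xs⟫ := by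
  set v := y - xs with hv
  have hcurve : ∀ τ : ℝ, xs + τ • v = (1 - τ) • xs + τ • y := by
    intro τ; rw [hv]; module
  have hderiv : HasDerivAt (fun τ : ℝ => ω (xs + τ • v)) ⟪ω' xs, v⟫ 0 := by
    have h1 : HasDerivAt (fun τ : ℝ => xs + τ • v) v 0 := by
      simpa using ((hasDerivAt_id (0:ℝ)).smul_const v).const_add xs
    have hω2 : HasFDerivAt ω ((InnerProductSpace.toDual ℝ (Euc d)) (ω' xs)) (xs + (0:ℝ) • v) := by
      simpa using hω.hasFDerivAt
    have h2 := hω2.comp_hasDerivAt 0 h1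
    exact h2
  have hslope : Filter.Tendsto (fun τ : ℝ => (ω (xs + τ • v) - ω xs) / τ)
      (nhdsWithin 0 (Ioi 0)) (nhds ⟪ω' xs, v⟫) := by
    have := hasDerivAt_iff_tendsto_slope.mp hderiv
    have h2 : Filter.Tendsto (slope (fun τ : ℝ => ω (xs + τ • v)) 0)
        (nhdsWithin 0 (Ioi 0)) (nhds ⟪ω' xs, v⟫) :=
      this.mono_left (nhdsWithin_mono 0 (by intro x hx; exact ne_of_gt hx))
    refine h2.congr' ?_
    filter_upwards [self_mem_nhdsWithin] with τ hτ
    simp [slope, div_eq_inv_mul]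
  have hineq : ∀ τ : ℝ, τ ∈ Ioc (0:ℝ) 1 →
      ⟪ω' xt, v⟫ - η * ⟪g, v⟫ - η * (r y - r xs) ≤ (ω (xs + τ • v) - ω xs) / τ := by
    intro τ hτ
    obtain ⟨hτ0, hτ1⟩ := hτ
    have hmem : xs + τ • v ∈ X := by
      rw [hcurve]
      exact hXconv hxs hy (by linarith) (le_of_lt hτ0) (by ring)
    have hm := isMinOn_iff.mp hmin _ hmem
    simp only [breg] at hm
    have hrc : r (xs + τ • v) ≤ (1 - τ) * r xs + τ * r y := by
      rw [hcurve]
      have := hr.2 (mem_univ xs) (mem_univ y) (by linarith : (0:ℝ) ≤ 1 - τ)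
        (le_of_lt hτ0) (by ring)
      simpa using this
    have hip : ⟪g, xs + τ • v⟫ = ⟪g, xs⟫ + τ * ⟪g, v⟫ := by
      rw [inner_add_right, real_inner_smul_right]
    have hip2 : ⟪ω' xt, xs + τ • v - xt⟫ = ⟪ω' xt, xs - xt⟫ + τ * ⟪ω' xt, v⟫ := by
      have : xs + τ • v - xt = (xs - xt) + τ • v := by abel
      rw [this, inner_add_right, real_inner_smul_right]
    rw [hip, hip2] at hm
    rw [le_div_iff₀ hτ0]
    nlinarith [mul_le_mul_of_nonneg_left hrc hη]
  have hlim := ge_of_tendsto hslope (by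
    filter_upwards [Ioc_mem_nhdsGT_of_mem (by norm_num : (0:ℝ) ∈ Ico (0:ℝ) 1)] with τ hτ
    exact hineq τ hτ)
  have hexp : ⟪ω' xs - ω' xt, v⟫ = ⟪ω' xs, v⟫ - ⟪ω' xt, v⟫ := inner_sub_left _ _ _
  linarith

/-- Step II, one step progress on the Lyapunov function
`λ_t = Φ_{1/ρ}(x_t) - Φ* + η_{t-1} ρ (Φ(x_t) - Φ*)`. -/
theorem one_step_progress_lyapunov {d : ℕ}
    (X S : Set (Euc d))
    (F r ω : Euc d → ℝ) (F' ω' : Euc d → Euc d) (ℓ : ℝ) (hℓ : 0 ≤ ℓ)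
    (hXclosed : IsClosed X) (hXconv : Convex ℝ X) (hXne : X.Nonempty)
    (hSopen : IsOpen S) (hriS : intrinsicInterior ℝ X ⊆ S)
    (hωdiff : ∀ z ∈ S, HasGradientAt ω (ω' z) z)
    (hω'cont : ContinuousOn ω' S)
    (hstrong : ∀ z ∈ closure S, ∀ y ∈ closure S, (1 / 2) * ‖z - y‖ ^ 2 ≤ breg ω ω' z y)
    (hr : ConvexOn ℝ Set.univ r) (hrlsc : LowerSemicontinuous r)
    (hFdiff : ∀ z ∈ X ∩ S, HasGradientAt F (F' z) z)
    (hsmooth : ∀ z ∈ X ∩ S, ∀ y ∈ X ∩ S,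
      -(ℓ * breg ω ω' z y) ≤ F z - F y - ⟪F' y, z - y⟫ ∧
        F z - F y - ⟪F' y, z - y⟫ ≤ ℓ * breg ω ω' z y)
    (hΦbdd : BddBelow ((fun z => F z + r z) '' X))
    (ρ : ℝ) (hρ : ℓ < ρ)
    (ηprev ηcur : ℝ) (hηcur : 0 < ηcur) (hηmono : ηcur ≤ ηprev)
    (xt : Euc d) (hxt : xt ∈ X ∩ S)
    (ψ : Euc d)
    (xnext : Euc d) (hxnextmem : xnext ∈ X ∩ S)
    (hxnext : IsMinOn
      (fun z => ηcur * (⟪F' xt + ψ, z⟫ + r z) + breg ω ω' z xt) X xnext)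
    (xhat : Euc d) (hxhatmem : xhat ∈ X ∩ S)
    (hxhat : IsMinOn (fun y => F y + r y + ρ * breg ω ω' y xt) X xhat)
    (hmoreau_att_next : ∃ y ∈ X ∩ S,
      IsMinOn (fun u => F u + r u + ρ * breg ω ω' u xnext) X y)
    (hfbe_att : ∃ y ∈ X ∩ S,
      IsMinOn (fun u => ⟪F' xt, u - xt⟫ + (ρ + ℓ) * breg ω ω' u xt + r u - r xt) X y) :
    moreau X F r ω ω' ρ xnext - sInf ((fun z => F z + r z) '' X) +
        ηcur * ρ * (F xnext + r xnext - sInf ((fun z => F z + r z) '' X)) ≤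
      (moreau X F r ω ω' ρ xt - sInf ((fun z => F z + r z) '' X) +
          ηprev * ρ * (F xt + r xt - sInf ((fun z => F z + r z) '' X))) -
        (ηcur * ρ / (2 * (ρ + ℓ))) * Dfbe X F' r ω ω' (ρ + ℓ) xt +
        ρ * ηcur * ⟪ψ, xhat - xt⟫ +
        ρ * (ηcur * ⟪ψ, xt - xnext⟫ - (1 - ηcur * ℓ) * breg ω ω' xnext xt) -
        ηcur * ρ * (ρ - ℓ) * breg ω ω' xhat xt := by
  obtain ⟨ynext, hynextmem, hynext⟩ := hmoreau_att_next
  obtain ⟨yf, hyfmem, hyf⟩ := hfbe_att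
  have hρ0 : 0 < ρ := lt_of_le_of_lt hℓ hρ
  have hρℓ : 0 < ρ + ℓ := by linarith
  set P := sInf ((fun z => F z + r z) '' X) with hP
  set sVal := sInf ((fun y => ⟪F' xt, y - xt⟫ + (ρ + ℓ) * breg ω ω' y xt + r y - r xt) '' X)
    with hsVal
  -- P is a lower bound at xt
  have hPt : P ≤ F xt + r xt := csInf_le hΦbdd ⟨xt, hxt.1, rfl⟩
  -- moreau at xt attained at xhat
  have hMt : moreau X F r ω ω' ρ xt = F xhat + r xhat + ρ * breg ω ω' xhat xt := by
    apply IsLeast.csInf_eq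
    refine ⟨⟨xhat, hxhatmem.1, rfl⟩, ?_⟩
    rintro b ⟨u, hu, rfl⟩
    exact isMinOn_iff.mp hxhat u hu
  -- moreau at xnext bounded via xhat
  have hMn : moreau X F r ω ω' ρ xnext ≤ F xhat + r xhat + ρ * breg ω ω' xhat xnext := by
    have heq : moreau X F r ω ω' ρ xnext = F ynext + r ynext + ρ * breg ω ω' ynext xnext := by
      apply IsLeast.csInf_eq
      refine ⟨⟨ynext, hynextmem.1, rfl⟩, ?_⟩
      rintro b ⟨u, hu, rfl⟩
      exact isMinOn_iff.mp hynext u hu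
    rw [heq]
    exact isMinOn_iff.mp hynext xhat hxhatmem.1
  -- FBE infimum attained at yf
  have hsEq : sVal = ⟪F' xt, yf - xt⟫ + (ρ + ℓ) * breg ω ω' yf xt + r yf - r xt := by
    apply IsLeast.csInf_eq
    refine ⟨⟨yf, hyfmem.1, rfl⟩, ?_⟩
    rintro b ⟨u, hu, rfl⟩
    exact isMinOn_iff.mp hyf u hu
  -- moreau gap bounded by FBE inner value
  have hBs : F xhat + r xhat + ρ * breg ω ω' xhat xt ≤ F xt + r xt + sVal := by
    have h1 : F xhat + r xhat + ρ * breg ω ω' xhat xt ≤ F yf + r yf + ρ * breg ω ω' yf xt :=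
      isMinOn_iff.mp hxhat yf hyfmem.1
    have h2 : F yf - F xt - ⟪F' xt, yf - xt⟫ ≤ ℓ * breg ω ω' yf xt :=
      (hsmooth yf hyfmem xt hxt).2
    rw [hsEq]
    linarith
  -- Dfbe rewrite
  have hDfbe : (ηcur * ρ / (2 * (ρ + ℓ))) * Dfbe X F' r ω ω' (ρ + ℓ) xt
      = -(ηcur * ρ * sVal) := by
    rw [Dfbe, ← hsVal]
    field_simp
  -- optimality of xnext
  have hopt := opt_ineq hXconv ω r ω' (F' xt + ψ) hr hηcur.le xt xnext xhat
    hxnextmem.1 hxhatmem.1 hxnext (hωdiff xnext hxnextmem.2)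
  -- expand the inner product
  have e1 : ⟪F' xt + ψ, xhat - xnext⟫
      = ⟪F' xt, xhat - xt⟫ - ⟪F' xt, xnext - xt⟫ + ⟪ψ, xhat - xt⟫ + ⟪ψ, xt - xnext⟫ := by
    simp only [inner_add_left, inner_sub_right]
    ring
  rw [e1] at hopt
  have e2 : ⟪ω' xt - ω' xnext, xhat - xnext⟫ = -⟪ω' xnext - ω' xt, xhat - xnext⟫ := by
    simp only [inner_sub_left]
    ring
  have tp := breg_three ω ω' xhat xnext xt
  rw [e2] at tp
  -- key inequality on breg xhat xnext
  have key1 : breg ω ω' xhat xnext ≤ breg ω ω' xhat xt - breg ω ω' xnext xt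
      + ηcur * (⟪F' xt, xhat - xt⟫ - ⟪F' xt, xnext - xt⟫ + ⟪ψ, xhat - xt⟫ + ⟪ψ, xt - xnext⟫)
      + ηcur * (r xhat - r xnext) := by
    linarith
  have key3 := mul_le_mul_of_nonneg_left key1 hρ0.le
  -- smoothness bounds, multiplied by ρ * ηcur
  have hρη : (0:ℝ) ≤ ρ * ηcur := mul_nonneg hρ0.le hηcur.le
  have hs1' : ⟪F' xt, xhat - xt⟫ ≤ F xhat - F xt + ℓ * breg ω ω' xhat xt := by
    linarith [(hsmooth xhat hxhatmem xt hxt).1]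
  have hs2' : -⟪F' xt, xnext - xt⟫ ≤ F xt - F xnext + ℓ * breg ω ω' xnext xt := by
    linarith [(hsmooth xnext hxnextmem xt hxt).2]
  have K4 := mul_le_mul_of_nonneg_left hs1' hρη
  have K5 := mul_le_mul_of_nonneg_left hs2' hρη
  have K6 := mul_le_mul_of_nonneg_left hBs hρη
  have K7 := mul_le_mul_of_nonneg_left hPt
    (mul_nonneg (by linarith : (0:ℝ) ≤ ηprev - ηcur) hρ0.le)
  rw [hMt, hDfbe]
  linarith [hMn, key3, K4, K5, K6, K7]
end

section
/- (Proposition: polynomial Hessian growth implies relative smoothness.) Suppose F: ℝ^d → ℝ is twice differentiable and there exist r, L, L_r ≥ 0 such that the operator norm of the Hessian satisfies ‖∇²F(x)‖_op ≤ L + L_r·‖x‖₂^r for all x ∈ ℝ^d. Then F is ℓ-smooth relative to ω(x) := ‖x‖₂^{r+2}/(r+2) + ‖x‖₂²/2 with ℓ := max{L, L_r}; that is, −ℓ·D_ω(x,y) ≤ F(x) − F(y) − ⟨∇F(y), x − y⟩ ≤ ℓ·D_ω(x,y) for all x, y ∈ ℝ^d, where D_ω(x,y) := ω(x) − ω(y)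 − ⟨∇ω(y), x − y⟩. -/
open RealInnerProductSpace

open Set Filter Topology



/-- MVT twice: one-sided bound. -/
private lemma key_one (A B A' B' : ℝ → ℝ)
    (hA : ∀ t, HasDerivAt A (A' t) t) (hB : ∀ t, HasDerivAt B (B' t) t)
    (h2 : ∀ t, ∃ a b, HasDerivAt A' a t ∧ HasDerivAt B' b t ∧ a ≤ b) :
    A 1 - A 0 - A' 0 ≤ B 1 - B 0 - B' 0 := by
  have hGmono : Monotone (fun t => B' t - A' t) := by
    apply monotone_of_deriv_nonneg
    · intro t; obtain ⟨a, b, ha, hb, _⟩ := h2 t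
      exact (hb.sub ha).differentiableAt
    · intro t; obtain ⟨a, b, ha, hb, hab⟩ := h2 t
      rw [show (fun t => B' t - A' t) = B' - A' from rfl, (hb.sub ha).deriv]; linarith
  have hH' : ∀ t, HasDerivAt (fun t => B t - A t) (B' t - A' t) t :=
    fun t => (hB t).sub (hA t)
  obtain ⟨c, hc, hceq⟩ := exists_hasDerivAt_eq_slope (fun t => B t - A t)
    (fun t => B' t - A' t) (by norm_num : (0:ℝ) < 1)
    (fun t _ => (hH' t).continuousAt.continuousWithinAt)
    (fun t _ => hH' t)
  have h0c : B' 0 - A' 0 ≤ B' c - A' c := hGmono hc.1.le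
  simp only [sub_zero, div_one] at hceq
  linarith

private lemma key_abs (A B A' B' : ℝ → ℝ)
    (hA : ∀ t, HasDerivAt A (A' t) t) (hB : ∀ t, HasDerivAt B (B' t) t)
    (h2 : ∀ t, ∃ a b, HasDerivAt A' a t ∧ HasDerivAt B' b t ∧ |a| ≤ b) :
    |A 1 - A 0 - A' 0| ≤ B 1 - B 0 - B' 0 := by
  rw [abs_le]
  constructor
  · have := key_one (fun t => -(A t)) B (fun t => -(A' t)) B'
      (fun t => (hA t).neg) hB (fun t => by
        obtain ⟨a, b, ha, hb, hab⟩ := h2 t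
        exact ⟨-a, b, ha.neg, hb, le_trans (neg_le_abs a) hab⟩)
    linarith
  · exact key_one A B A' B' hA hB (fun t => by
      obtain ⟨a, b, ha, hb, hab⟩ := h2 t
      exact ⟨a, b, ha, hb, le_trans (le_abs_self a) hab⟩)

/-- derivative at the degenerate point. -/
private lemma deg_deriv {r : ℝ} (hr : 0 < r) (a c : ℝ) :
    HasDerivAt (fun t : ℝ => (|t - a| * c) ^ r * ((t - a) * c ^ 2)) 0 a := by
  rw [hasDerivAt_iff_tendsto_slope]
  have h0 : Tendsto (fun t : ℝ => |t - a| * c) (𝓝 a) (𝓝 0) := by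
    have h : Tendsto (fun t : ℝ => t - a) (𝓝 a) (𝓝 0) := by
      have := ((continuous_id.sub (continuous_const (y := a))).tendsto a)
      simpa [Pi.sub_def] using this
    simpa using h.abs.mul_const c
  have h2 : Tendsto (fun t : ℝ => (|t - a| * c) ^ r) (𝓝 a) (𝓝 0) := by
    have hc : ContinuousAt (fun u : ℝ => u ^ r) 0 :=
      Real.continuousAt_rpow_const 0 r (Or.inr hr.le)
    have := hc.tendsto.comp h0
    simpa [Function.comp_def, Real.zero_rpow hr.ne'] using this
  have h3 : Tendsto (fun t : ℝ => (|t - a| * c) ^ r * c ^ 2) (𝓝[≠] a) (𝓝 0) := by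
    simpa using (h2.mul_const (c ^ 2)).mono_left nhdsWithin_le_nhds
  apply h3.congr'
  filter_upwards [self_mem_nhdsWithin] with t ht
  have ht' : t - a ≠ 0 := sub_ne_zero.mpr ht
  have : slope (fun t : ℝ => (|t - a| * c) ^ r * ((t - a) * c ^ 2)) a t
      = ((|t - a| * c) ^ r * ((t - a) * c ^ 2) - 0) / (t - a) := by
    simp [slope_def_field, Real.zero_rpow hr.ne']
  rw [this]
  field_simp
  ring

variable {E : Type*} [NormedAddCommGroup E] [InnerProductSpace ℝ E]

private lemma line_deriv (y v : E) (t : ℝ) :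
    HasDerivAt (fun s : ℝ => y + s • v) v t := by
  simpa using (((hasDerivAt_id t).smul_const v).const_add y)

private lemma Q_deriv (y v : E) (t : ℝ) :
    HasDerivAt (fun s : ℝ => ⟪y + s • v, y + s • v⟫)
      (2 * ⟪y + t • v, v⟫) t := by
  have := (line_deriv y v t).inner ℝ (line_deriv y v t)
  refine this.congr_deriv ?_
  rw [real_inner_comm]; ring

private lemma inner_line_deriv (y v : E) (t : ℝ) :
    HasDerivAt (fun s : ℝ => ⟪y + s • v, v⟫) (‖v‖ ^ 2) t := by
  have := (line_deriv y v t).inner ℝ (hasDerivAt_const t v)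
  simpa [real_inner_self_eq_norm_sq] using this

private lemma norm_rpow_eq (r : ℝ) (z : E) :
    ‖z‖ ^ r = ⟪z, z⟫ ^ (r / 2) := by
  rw [real_inner_self_eq_norm_sq, ← Real.rpow_natCast ‖z‖ 2,
    ← Real.rpow_mul (norm_nonneg z)]
  congr 1; ring

private lemma psi'_deriv {r : ℝ} (hr : 0 ≤ r) (y v : E) (t : ℝ) :
    ∃ c, HasDerivAt (fun s : ℝ => (1 + ‖y + s • v‖ ^ r) * ⟪y + s • v, v⟫) c t ∧
      (1 + ‖y + t • v‖ ^ r) * ‖v‖ ^ 2 ≤ c := by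
  rcases eq_or_lt_of_le hr with hr0 | hrpos
  · -- r = 0
    refine ⟨2 * ‖v‖ ^ 2, ?_, by rw [← hr0, Real.rpow_zero]; ring_nf; rfl⟩
    have : (fun s : ℝ => (1 + ‖y + s • v‖ ^ r) * ⟪y + s • v, v⟫)
        = fun s : ℝ => 2 * ⟪y + s • v, v⟫ := by
      funext s; rw [← hr0, Real.rpow_zero]; ring
    rw [this]
    simpa using (inner_line_deriv y v t).const_mul 2
  rcases eq_or_ne (y + t • v) 0 with hz0 | hz0
  · -- degenerate point
    have hy : y = -(t • v) := by linear_combination (norm := module) hz0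
    have hfun : (fun s : ℝ => (1 + ‖y + s • v‖ ^ r) * ⟪y + s • v, v⟫)
        = fun s : ℝ => ((s - t) * ‖v‖ ^ 2 + (|s - t| * ‖v‖) ^ r * ((s - t) * ‖v‖ ^ 2)) := by
      funext s
      have hzz : y + s • v = (s - t) • v := by rw [hy, sub_smul]; abel
      rw [hzz, norm_smul, real_inner_smul_left, real_inner_self_eq_norm_sq,
        Real.norm_eq_abs]
      ring
    refine ⟨‖v‖ ^ 2 + 0, ?_, by
      rw [hz0, norm_zero, Real.zero_rpow hrpos.ne']; simp⟩
    rw [hfun]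
    apply HasDerivAt.add
    · simpa using ((hasDerivAt_id t).sub_const t).mul_const (‖v‖ ^ 2)
    · exact deg_deriv hrpos t ‖v‖
  · -- nondegenerate point
    have hQpos : (0:ℝ) < ⟪y + t • v, y + t • v⟫ := by
      rw [real_inner_self_eq_norm_sq]; exact pow_pos (norm_pos_iff.mpr hz0) 2
    have hfun : (fun s : ℝ => (1 + ‖y + s • v‖ ^ r) * ⟪y + s • v, v⟫)
        = fun s : ℝ => (1 + ⟪y + s • v, y + s • v⟫ ^ (r / 2)) * ⟪y + s • v, v⟫ := by
      funext s; rw [norm_rpow_eq]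
    have hrp : HasDerivAt (fun s : ℝ => ⟪y + s • v, y + s • v⟫ ^ (r / 2))
        ((r / 2) * ⟪y + t • v, y + t • v⟫ ^ (r / 2 - 1) * (2 * ⟪y + t • v, v⟫)) t :=
      by have h := Real.hasDerivAt_rpow_const (x := ⟪y + t • v, y + t • v⟫) (p := r / 2) (Or.inl hQpos.ne'); exact h.comp t (Q_deriv y v t)
    have hprod := ((hrp.const_add 1).mul (inner_line_deriv y v t))
    refine ⟨_, by rw [hfun]; exact hprod, ?_⟩
    rw [norm_rpow_eq]
    have h1 : 0 ≤ (r / 2) * ⟪y + t • v, y + t • v⟫ ^ (r / 2 - 1) * (2 * ⟪y + t • v, v⟫)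
        * ⟪y + t • v, v⟫ := by
      have h0 := Real.rpow_nonneg hQpos.le (r / 2 - 1)
      have heq : (r / 2) * ⟪y + t • v, y + t • v⟫ ^ (r / 2 - 1) * (2 * ⟪y + t • v, v⟫)
          * ⟪y + t • v, v⟫ = r * (⟪y + t • v, y + t • v⟫ ^ (r / 2 - 1)
          * ⟪y + t • v, v⟫ ^ 2) := by ring
      rw [heq]
      exact mul_nonneg hr (mul_nonneg h0 (sq_nonneg _))
    nlinarith
private lemma psi_deriv {E : Type*} [NormedAddCommGroup E] [InnerProductSpace ℝ E]
    {r : ℝ} (hr : 0 ≤ r) (y v : E) (t : ℝ) :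
    HasDerivAt (fun s : ℝ => ‖y + s • v‖ ^ (r + 2) / (r + 2) + ‖y + s • v‖ ^ 2 / 2)
      ((1 + ‖y + t • v‖ ^ r) * ⟪y + t • v, v⟫) t := by
  have hne : r + 2 ≠ 0 := by linarith
  have hfun : (fun s : ℝ => ‖y + s • v‖ ^ (r + 2) / (r + 2) + ‖y + s • v‖ ^ 2 / 2)
      = fun s : ℝ => ⟪y + s • v, y + s • v⟫ ^ ((r + 2) / 2) / (r + 2)
        + ⟪y + s • v, y + s • v⟫ / 2 := by
    funext s
    rw [norm_rpow_eq (r + 2), real_inner_self_eq_norm_sq]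
  rw [hfun]
  have hp1 : (1:ℝ) ≤ (r + 2) / 2 := by linarith
  have hrp : HasDerivAt (fun s : ℝ => ⟪y + s • v, y + s • v⟫ ^ ((r + 2) / 2))
      (((r + 2) / 2) * ⟪y + t • v, y + t • v⟫ ^ ((r + 2) / 2 - 1)
        * (2 * ⟪y + t • v, v⟫)) t :=
    (Real.hasDerivAt_rpow_const (Or.inr hp1)).comp t (Q_deriv y v t)
  have hder := (hrp.div_const (r + 2)).add ((Q_deriv y v t).div_const 2)
  refine hder.congr_deriv ?_
  have hQr : ⟪y + t • v, y + t • v⟫ ^ ((r + 2) / 2 - 1) = ‖y + t • v‖ ^ r := by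
    rw [norm_rpow_eq r]
    congr 1; ring
  rw [hQr]
  field_simp
  ring

/-- Proposition 2: if `F` is twice differentiable with
`‖∇²F(x)‖_op ≤ L + L_r ‖x‖₂^r`, then `F` is `max{L, L_r}`-smooth relative to
`ω(x) = ‖x‖₂^{r+2}/(r+2) + ‖x‖₂²/2`. -/
theorem polynomial_hessian_growth_implies_rel_smoothness {d : ℕ}
    (F : Euc d → ℝ) (F' : Euc d → Euc d) (F'' : Euc d → Euc d →L[ℝ] Euc d)
    (rexp L Lr : ℝ) (hrexp : 0 ≤ rexp) (hL : 0 ≤ L) (hLr : 0 ≤ Lr)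
    (hFdiff : ∀ z, HasGradientAt F (F' z) z)
    (hF'diff : ∀ z, HasFDerivAt F' (F'' z) z)
    (hhess : ∀ z, ‖F'' z‖ ≤ L + Lr * ‖z‖ ^ rexp) :
    ∀ x y : Euc d,
      -(max L Lr * ((‖x‖ ^ (rexp + 2) / (rexp + 2) + ‖x‖ ^ 2 / 2) -
          (‖y‖ ^ (rexp + 2) / (rexp + 2) + ‖y‖ ^ 2 / 2) -
          ⟪(1 + ‖y‖ ^ rexp) • y, x - y⟫)) ≤
        F x - F y - ⟪F' y, x - y⟫ ∧
      F x - F y - ⟪F' y, x - y⟫ ≤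
        max L Lr * ((‖x‖ ^ (rexp + 2) / (rexp + 2) + ‖x‖ ^ 2 / 2) -
          (‖y‖ ^ (rexp + 2) / (rexp + 2) + ‖y‖ ^ 2 / 2) -
          ⟪(1 + ‖y‖ ^ rexp) • y, x - y⟫) := by
  intro x y
  set l := max L Lr with hldef
  set v := x - y with hv
  have hl0 : 0 ≤ l := le_trans hL (le_max_left L Lr)
  have hLl : L ≤ l := le_max_left L Lr
  have hLrl : Lr ≤ l := le_max_right L Lr
  have hz : ∀ t : ℝ, HasDerivAt (fun s : ℝ => y + s • v) v t := line_deriv y v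
  have hPhi : ∀ t : ℝ, HasDerivAt (fun s : ℝ => F (y + s • v)) (⟪F' (y + t • v), v⟫) t := by
    intro t
    have := ((hFdiff (y + t • v)).hasFDerivAt).comp_hasDerivAt t (hz t)
    simpa [InnerProductSpace.toDual_apply_apply, Function.comp_def] using this
  have hPhi' : ∀ t : ℝ, HasDerivAt (fun s : ℝ => ⟪F' (y + s • v), v⟫)
      (⟪F'' (y + t • v) v, v⟫) t := by
    intro t
    have h1 : HasDerivAt (fun s : ℝ => F' (y + s • v)) (F'' (y + t • v) v) t :=
      (hF'diff (y + t • v)).comp_hasDerivAt t (hz t)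
    simpa [real_inner_comm] using h1.inner ℝ (hasDerivAt_const t v)
  have key := key_abs (fun s : ℝ => F (y + s • v))
    (fun s : ℝ => l * (‖y + s • v‖ ^ (rexp + 2) / (rexp + 2) + ‖y + s • v‖ ^ 2 / 2))
    (fun s : ℝ => ⟪F' (y + s • v), v⟫)
    (fun s : ℝ => l * ((1 + ‖y + s • v‖ ^ rexp) * ⟪y + s • v, v⟫))
    hPhi (fun t => (psi_deriv hrexp y v t).const_mul l)
    (fun t => by
      obtain ⟨c, hc, hcge⟩ := psi'_deriv hrexp y v t
      refine ⟨⟪F'' (y + t • v) v, v⟫, l * c, hPhi' t, hc.const_mul l, ?_⟩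
      set z := y + t • v
      have h1 : |⟪F'' z v, v⟫| ≤ ‖F'' z‖ * (‖v‖ * ‖v‖) := by
        calc |⟪F'' z v, v⟫| ≤ ‖F'' z v‖ * ‖v‖ := abs_real_inner_le_norm _ _
          _ ≤ ‖F'' z‖ * ‖v‖ * ‖v‖ := by
              gcongr
              exact (F'' z).le_opNorm v
          _ = ‖F'' z‖ * (‖v‖ * ‖v‖) := by ring
      have h2 : ‖F'' z‖ ≤ L + Lr * ‖z‖ ^ rexp := hhess z
      have hR : 0 ≤ ‖z‖ ^ rexp := Real.rpow_nonneg (norm_nonneg z) rexp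
      have hV : 0 ≤ ‖v‖ * ‖v‖ := mul_nonneg (norm_nonneg v) (norm_nonneg v)
      have h3 : ‖F'' z‖ * (‖v‖ * ‖v‖) ≤ (L + Lr * ‖z‖ ^ rexp) * (‖v‖ * ‖v‖) :=
        mul_le_mul_of_nonneg_right h2 hV
      have h4 : (L + Lr * ‖z‖ ^ rexp) * (‖v‖ * ‖v‖) ≤ l * ((1 + ‖z‖ ^ rexp) * ‖v‖ ^ 2) := by
        rw [sq]
        nlinarith [mul_nonneg (mul_nonneg (sub_nonneg.mpr hLrl) hR) hV,
          mul_nonneg (sub_nonneg.mpr hLl) hV]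
      have h5 : l * ((1 + ‖z‖ ^ rexp) * ‖v‖ ^ 2) ≤ l * c :=
        mul_le_mul_of_nonneg_left hcge hl0
      linarith)
  have e1 : y + (1:ℝ) • v = x := by rw [one_smul, hv]; abel
  have e0 : y + (0:ℝ) • v = y := by rw [zero_smul, add_zero]
  beta_reduce at key
  rw [e1, e0] at key
  rw [abs_le] at key
  obtain ⟨k1, k2⟩ := key
  have hsm : ⟪(1 + ‖y‖ ^ rexp) • y, x - y⟫ = (1 + ‖y‖ ^ rexp) * ⟪y, v⟫ := by
    rw [real_inner_smul_left, hv]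
  constructor
  · rw [hsm]; linarith [k1]
  · rw [hsm]; linarith [k2]
end

section
/- (Closed form of the mirror step for ω(x) = ‖x‖₂^{r+2}/(r+2) + ‖x‖₂²/2.) Fix r > 0 and c ∈ ℝ^d. Then the equation (1 + ‖x‖₂^r)·x = c (i.e. ∇ω(x) = c) has a unique solution x ∈ ℝ^d, given by x = c/(1 + θ*^r), where θ* ≥ 0 is the unique nonnegative real solution of the scalar equation θ^{r+1} + θ = ‖c‖₂. -/
/-!
Taking norms in `(1 + ‖x‖^r) • x = c` gives the scalar equation `‖x‖^(r+1) + ‖x‖ = ‖c‖`. Its left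
side is continuous and strictly increasing on `[0, ∞)` from `0` to `∞`, so it has exactly one
nonnegative root `θ*`. Hence every solution has norm `θ*` and is `c / (1 + θ*^r)`, and this vector
does solve the equation because its norm is `‖c‖ / (1 + θ*^r) = θ*`.
-/

open Set

section

variable {r : ℝ}

lemma one_add_rpow_pos {θ : ℝ} (hθ : 0 ≤ θ) : 0 < 1 + θ ^ r := by
  have := Real.rpow_nonneg hθ r
  linarith

lemma rpow_add_one_add_self_eq_mul (hr : 0 ≤ r) {θ : ℝ} (hθ : 0 ≤ θ) :
    θ ^ (r + 1) + θ = (1 + θ ^ r) * θ := by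
  rw [Real.rpow_add_one' hθ (by linarith)]
  ring

lemma strictMonoOn_rpow_add_one_add_self (hr : 0 ≤ r) :
    StrictMonoOn (fun θ : ℝ => θ ^ (r + 1) + θ) (Ici 0) :=
  (Real.monotoneOn_rpow_Ici_of_exponent_nonneg (by linarith)).add_strictMono
    (strictMono_id.strictMonoOn _)

lemma existsUnique_rpow_add_one_add_self_eq (hr : 0 ≤ r) {b : ℝ} (hb : 0 ≤ b) :
    ∃! θ : ℝ, 0 ≤ θ ∧ θ ^ (r + 1) + θ = b := by
  have hcont : ContinuousOn (fun θ : ℝ => θ ^ (r + 1) + θ) (Icc 0 b) :=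
    ((Real.continuous_rpow_const (by linarith)).add continuous_id).continuousOn
  have hb_mem : b ∈ Icc ((0 : ℝ) ^ (r + 1) + 0) (b ^ (r + 1) + b) := by
    rw [Real.zero_rpow (by linarith), add_zero]
    exact ⟨hb, le_add_of_nonneg_left (Real.rpow_nonneg hb _)⟩
  obtain ⟨θ, hθ, hθb⟩ := intermediate_value_Icc hb hcont hb_mem
  refine ⟨θ, ⟨hθ.1, hθb⟩, fun η ⟨hη, hηb⟩ => ?_⟩
  exact (strictMonoOn_rpow_add_one_add_self hr).injOn hη hθ.1 (hηb.trans hθb.symm)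

variable {E : Type*} [NormedAddCommGroup E] [NormedSpace ℝ E]

lemma norm_one_add_norm_rpow_smul (hr : 0 ≤ r) (x : E) :
    ‖(1 + ‖x‖ ^ r) • x‖ = ‖x‖ ^ (r + 1) + ‖x‖ := by
  rw [norm_smul, Real.norm_of_nonneg (one_add_rpow_pos (norm_nonneg x)).le,
    rpow_add_one_add_self_eq_mul hr (norm_nonneg x)]

lemma injective_one_add_norm_rpow_smul (hr : 0 ≤ r) :
    Function.Injective fun x : E => (1 + ‖x‖ ^ r) • x := by
  intro x y hxy
  have hnorm : ‖x‖ = ‖y‖ := by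
    apply (strictMonoOn_rpow_add_one_add_self hr).injOn (norm_nonneg x) (norm_nonneg y)
    simpa only [norm_one_add_norm_rpow_smul hr] using congrArg norm hxy
  simp only [hnorm] at hxy
  exact smul_right_injective E (one_add_rpow_pos (norm_nonneg y)).ne' hxy

lemma one_add_norm_rpow_smul_inv_smul (hr : 0 ≤ r) {θ : ℝ} (hθ : 0 ≤ θ) {c : E}
    (hθc : θ ^ (r + 1) + θ = ‖c‖) :
    (1 + ‖(1 + θ ^ r)⁻¹ • c‖ ^ r) • ((1 + θ ^ r)⁻¹ • c) = c := by
  have hpos : 0 < 1 + θ ^ r := one_add_rpow_pos hθ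
  have hnorm : ‖(1 + θ ^ r)⁻¹ • c‖ = θ := by
    rw [norm_smul, Real.norm_of_nonneg (inv_nonneg.mpr hpos.le), ← hθc,
      rpow_add_one_add_self_eq_mul hr hθ, inv_mul_cancel_left₀ hpos.ne']
  rw [hnorm, smul_inv_smul₀ hpos.ne']

end

/-- for `r > 0` and `c ∈ ℝ^d` the mirror-step equation
`(1 + ‖x‖₂^r) x = c` has a unique solution, given by `x = c/(1 + θ*^r)` where `θ* ≥ 0` is the
unique nonnegative solution of `θ^{r+1} + θ = ‖c‖₂`. -/
theorem mirror_step_closed_form {d : ℕ} (rexp : ℝ) (hrexp : 0 < rexp) (c : Euc d) :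
    (∃! θ : ℝ, 0 ≤ θ ∧ θ ^ (rexp + 1) + θ = ‖c‖) ∧
    ∀ θ : ℝ, 0 ≤ θ → θ ^ (rexp + 1) + θ = ‖c‖ →
      (∃! x : Euc d, (1 + ‖x‖ ^ rexp) • x = c) ∧
      (1 + ‖(1 + θ ^ rexp)⁻¹ • c‖ ^ rexp) • ((1 + θ ^ rexp)⁻¹ • c) = c := by
  refine ⟨existsUnique_rpow_add_one_add_self_eq hrexp.le (norm_nonneg c), fun θ hθ hθc => ?_⟩
  have hsol := one_add_norm_rpow_smul_inv_smul hrexp.le hθ hθc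
  exact ⟨⟨_, hsol, fun x hx => injective_one_add_norm_rpow_smul hrexp.le (hx.trans hsol.symm)⟩,
    hsol⟩
end

section
/- (Frank–Wolfe gap is bounded via the gradient mapping, Euclidean case.) Let X ⊆ ℝ^d be a compact convex set with Euclidean diameter D_X := max_{x,y∈X}‖x − y‖₂, let F be differentiable on X with G := max_{x∈X}‖∇F(x)‖₂, take ω(x) = ‖x‖₂²/2 (so D_ω(y,x) = ‖y−x‖₂²/2) and r ≡ 0. Then for every x ∈ X and every ρ > 0, max_{y∈X}⟨∇F(x), x − y⟩ ≤ (D_X + ρ⁻¹·G)·√(Δ_ρ⁺(x)), where x⁺ := argmin_{y∈X}[⟨∇F(x), y⟩ + (ρ/2)‖y − x‖₂²] and Δ_ρ⁺(x) := ρ²‖x⁺ − x‖₂². -/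
open RealInnerProductSpace Set

/-- Lemma 19: in the Euclidean setting, the Frank–Wolfe gap is bounded via the
gradient mapping: `max_{y ∈ X} ⟨∇F(x), x - y⟩ ≤ (D_X + ρ⁻¹ G) √(Δ_ρ⁺(x))`. -/
theorem fw_gap_bounded_by_gradient_mapping {d : ℕ}
    (X : Set (Euc d)) (hXcomp : IsCompact X) (hXconv : Convex ℝ X) (hXne : X.Nonempty)
    (F : Euc d → ℝ) (F' : Euc d → Euc d)
    (hFdiff : ∀ z ∈ X, HasGradientAt F (F' z) z)
    (DX G : ℝ)
    (hDX : IsGreatest ((fun p : Euc d × Euc d => ‖p.1 - p.2‖) '' (X ×ˢ X)) DX)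
    (hG : IsGreatest ((fun z => ‖F' z‖) '' X) G)
    (x : Euc d) (hx : x ∈ X) (ρ : ℝ) (hρ : 0 < ρ)
    (xplus : Euc d) (hxplusmem : xplus ∈ X)
    (hxplus : IsMinOn (fun y => ⟪F' x, y⟫ + (ρ / 2) * ‖y - x‖ ^ 2) X xplus) :
    ∀ y ∈ X, ⟪F' x, x - y⟫ ≤ (DX + ρ⁻¹ * G) * Real.sqrt (ρ ^ 2 * ‖xplus - x‖ ^ 2) := by
  intro y hy
  set g := F' x with hg
  set a := xplus - x with ha
  set b := y - xplus with hb
  have hDb : ‖b‖ ≤ DX := hDX.2 ⟨(y, xplus), ⟨hy, hxplusmem⟩, rfl⟩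
  have hGg : ‖g‖ ≤ G := hG.2 ⟨x, hx, rfl⟩
  have hsqrt : Real.sqrt (ρ ^ 2 * ‖xplus - x‖ ^ 2) = ρ * ‖a‖ := by
    rw [← ha, show ρ ^ 2 * ‖a‖ ^ 2 = (ρ * ‖a‖) ^ 2 by ring,
      Real.sqrt_sq (by positivity)]
  rw [hsqrt]
  have key : ∀ t : ℝ, 0 < t → t ≤ 1 →
      ⟪g, xplus - y⟫ ≤ ρ * ⟪a, b⟫ + ρ / 2 * t * ‖b‖ ^ 2 := by
    intro t ht ht1
    have hz : (1 - t) • xplus + t • y ∈ X :=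
      hXconv hxplusmem hy (by linarith) ht.le (by ring)
    have hle := isMinOn_iff.mp hxplus _ hz
    have h1 : (1 - t) • xplus + t • y = xplus + t • b := by
      rw [hb]; module
    have h2 : (xplus + t • b) - x = a + t • b := by
      rw [ha]; module
    rw [h1, h2] at hle
    have h3 : ⟪g, xplus + t • b⟫ = ⟪g, xplus⟫ + t * ⟪g, b⟫ := by
      rw [inner_add_right, real_inner_smul_right]
    have h4 : ‖a + t • b‖ ^ 2 = ‖a‖ ^ 2 + 2 * (t * ⟪a, b⟫) + t ^ 2 * ‖b‖ ^ 2 := by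
      rw [norm_add_sq_real, real_inner_smul_right, norm_smul, mul_pow]
      simp [Real.norm_eq_abs, sq_abs]
    rw [h3, h4] at hle
    have hgb : ⟪g, xplus - y⟫ = -⟪g, b⟫ := by
      rw [show xplus - y = -b by rw [hb]; abel, inner_neg_right]
    rw [hgb]
    nlinarith [hle, mul_pos ht ht]
  have VI : ⟪g, xplus - y⟫ ≤ ρ * ⟪a, b⟫ := by
    refine le_of_forall_pos_le_add fun ε hε => ?_
    set c := ρ / 2 * ‖b‖ ^ 2 with hc
    have hc0 : 0 ≤ c := by positivity
    rcases eq_or_lt_of_le hc0 with h0 | h0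
    · have h := key 1 one_pos le_rfl
      have : ρ / 2 * 1 * ‖b‖ ^ 2 = c := by rw [hc]; ring
      rw [this, ← h0] at h
      linarith
    · set t := min 1 (ε / c) with htdef
      have ht : 0 < t := lt_min one_pos (div_pos hε h0)
      have h := key t ht (min_le_left _ _)
      have htc : ρ / 2 * t * ‖b‖ ^ 2 ≤ ε := by
        have h1 : t ≤ ε / c := min_le_right _ _
        have : ρ / 2 * t * ‖b‖ ^ 2 = t * c := by rw [hc]; ring
        rw [this]
        calc t * c ≤ (ε / c) * c := by nlinarith
          _ = ε := div_mul_cancel₀ _ (ne_of_gt h0)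
      linarith
  have h5 : ⟪g, x - y⟫ = ⟪g, x - xplus⟫ + ⟪g, xplus - y⟫ := by
    rw [← inner_add_right]
    congr 1
    abel
  have h6 : ⟪g, x - xplus⟫ ≤ G * ‖a‖ := by
    have h := real_inner_le_norm g (x - xplus)
    have hn : ‖x - xplus‖ = ‖a‖ := by rw [ha, norm_sub_rev]
    rw [hn] at h
    nlinarith [norm_nonneg a]
  have h7 : ⟪a, b⟫ ≤ ‖a‖ * ‖b‖ := real_inner_le_norm a b
  have h8 : ρ * ⟪a, b⟫ ≤ ρ * ‖a‖ * DX := by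
    nlinarith [mul_le_mul_of_nonneg_left h7 hρ.le,
      mul_le_mul_of_nonneg_left hDb (mul_nonneg hρ.le (norm_nonneg a))]
  have heq : (DX + ρ⁻¹ * G) * (ρ * ‖a‖) = ρ * ‖a‖ * DX + G * ‖a‖ := by
    field_simp
  rw [heq, h5]
  linarith
end
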